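/- Exponential decay of the normalized immigration contribution: fix t ∈ ℝ such that Λ(t) > 0 and E[log⁺(Y_0(t)/m_0(t))] < ∞. Then almost surely limsup_{n→∞} (1/n) log [Π_{n+1}(t)^{−1} Y_n(t)] ≤ −Λ(t). -/

import Mathlib

open MeasureTheory ProbabilityTheory Filter Set
open scoped ENNReal NNReal Topology

noncomputable section

/-- The positive part of the logarithm, `log⁺ x = max (log x) 0`. -/
def logPlus (x : ℝ) : ℝ := max (Real.log x) 0

/-- Extended logarithm on `ℝ≥0∞`, with `elog 0 = ⊥` and `elog ⊤ = ⊤`. -/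
def elog (x : ℝ≥0∞) : EReal :=
  if x = 0 then ⊥ else if x = ⊤ then ⊤ else ((Real.log x.toReal : ℝ) : EReal)

/-- The standard normal distribution function `Φ`. -/
def gaussCDF (x : ℝ) : ℝ :=
  (Real.sqrt (2 * Real.pi))⁻¹ * ∫ t in Set.Iic x, Real.exp (-(t ^ 2) / 2)

/-- A wrapper around `MeasurableSpace Ω`, used for sub-σ-algebra fields so that they do
not interfere with instance resolution. -/
structure SubSigmaAlgebra (Ω : Type) : Type where
  /-- the underlying σ-algebra -/
  σalg : MeasurableSpace Ω

/-- A branching random walk with immigration in a stationary and ergodic random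
environment indexed by time (BRWIRE).

Particles of the tree generated by the initial particle `∅` are labelled by Ulam-Harris
words `u : List ℕ` (children of `u` are `i :: u`, the generation of `u` is its length).
`Nx u` is the offspring number `N(u)` and `Lx u i` the displacement `L_{i+1}(u)`.
At time `n+1`, `V n` new immigrants arrive, located at `SI n i` (`i < V n`); the subtree
generated by the immigrant `0_n j` has offspring numbers `NI n j u` and displacements
`LI n j u i`.

The environment is represented by the sub-σ-algebra `𝔈` it generates, together with an
ergodic measure-preserving shift `θ`; `𝔊` is the σ-algebra generated by the environment
and the whole immigration sequence `Y = (Y_n)`.  Quenched laws and expectations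
`P_ξ, E_ξ` (resp. `P_{ξ,Y}, E_{ξ,Y}`) are realised as (kernels/expectations of)
conditioning on `𝔈` (resp. `𝔊`).

`m0 t` is the random variable `m_0(t) = E_ξ Σ_{i≤N} e^{t L_i}` attached to the first
environment coordinate, so that `m_n(t) = m_0(t) ∘ θ^[n]`; similarly `s0 = σ_0²`, with
`σ_n² = σ_0² ∘ θ^[n]` and `E_ξ Σ_{i≤N(u)} L_i(u)² = m_n σ_n²` for `|u| = n`.

The structure includes the standing assumptions of the paper: supercriticality
`E log m_0 > 0`, and `P_ξ(N = 0) = 0`, `P_ξ(N = 1) < 1`, `E_ξ Σ_{i≤N} L_i = 0` a.s.,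
conditional independence (given the environment) of all the reproduction and
immigration random vectors, and stationarity of the immigration data. -/
structure BRWIRE (Ω : Type) [MeasurableSpace Ω] [StandardBorelSpace Ω]
    (μ : Measure Ω) [IsFiniteMeasure μ] where
  /-- σ-algebra generated by the environment `ξ` -/
  𝔈 : SubSigmaAlgebra Ω
  /-- σ-algebra generated by the environment `ξ` and the immigration sequence `Y` -/
  𝔊 : SubSigmaAlgebra Ω
  hEG : 𝔈.σalg ≤ 𝔊.σalg
  hGF : 𝔊.σalg ≤ (inferInstance : MeasurableSpace Ω)
  /-- the shift of the environment -/
  θ : Ω → Ω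
  hθ : Ergodic θ μ
  /-- offspring numbers in the tree of the initial particle -/
  Nx : List ℕ → Ω → ℕ
  /-- displacements in the tree of the initial particle -/
  Lx : List ℕ → ℕ → Ω → ℝ
  /-- numbers of immigrants: `V n` immigrants join generation `n+1` -/
  V : ℕ → Ω → ℕ
  /-- positions `S_{0_n i}` of the immigrants -/
  SI : ℕ → ℕ → Ω → ℝ
  /-- offspring numbers in the subtree of the immigrant `0_n j` -/
  NI : ℕ → ℕ → List ℕ → Ω → ℕ
  /-- displacements in the subtree of the immigrant `0_n j` -/
  LI : ℕ → ℕ → List ℕ → ℕ → Ω → ℝ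
  /-- the random variable `m_0(t)`, a function of the environment coordinate `ξ_0` -/
  m0 : ℝ → Ω → ℝ
  /-- the random variable `σ_0²`, a function of the environment coordinate `ξ_0` -/
  s0 : Ω → ℝ
  measNx : ∀ u, Measurable (Nx u)
  measLx : ∀ u i, Measurable (Lx u i)
  measV : ∀ n, Measurable[𝔊.σalg] (V n)
  measSI : ∀ n i, Measurable[𝔊.σalg] (SI n i)
  measNI : ∀ n j u, Measurable (NI n j u)
  measLI : ∀ n j u i, Measurable (LI n j u i)
  measm0 : ∀ t, Measurable[𝔈.σalg] (m0 t)
  meass0 : Measurable[𝔈.σalg] s0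
  measθ : Measurable θ
  m0pos : ∀ t ω, 0 < m0 t ω
  s0nonneg : ∀ ω, 0 ≤ s0 ω
  /-- `E_ξ Σ_{i≤N(u)} e^{t L_i(u)} = m_{|u|}(t) = m_0(t) ∘ θ^[|u|]` -/
  hm : ∀ (t : ℝ) (u : List ℕ),
    (μ[fun ω => ∑ i ∈ Finset.range (Nx u ω), Real.exp (t * Lx u i ω)|𝔈.σalg])
      =ᵐ[μ] fun ω => m0 t (θ^[u.length] ω)
  /-- the same for the particles of the subtree of the immigrant `0_k j`,
  whose node `u` belongs to generation `k + 1 + |u|` -/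
  hmI : ∀ (t : ℝ) (k j : ℕ) (u : List ℕ),
    (μ[fun ω => ∑ i ∈ Finset.range (NI k j u ω), Real.exp (t * LI k j u i ω)|𝔈.σalg])
      =ᵐ[μ] fun ω => m0 t (θ^[k + 1 + u.length] ω)
  /-- `E_ξ Σ_{i≤N(u)} L_i(u)² = m_{|u|} σ_{|u|}²` -/
  hs : ∀ u : List ℕ,
    (μ[fun ω => ∑ i ∈ Finset.range (Nx u ω), (Lx u i ω) ^ 2|𝔈.σalg])
      =ᵐ[μ] fun ω => m0 0 (θ^[u.length] ω) * s0 (θ^[u.length] ω)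
  /-- `P_ξ(N = 0) = 0` a.s. -/
  hNpos : ∀ u, ∀ᵐ ω ∂μ, 1 ≤ Nx u ω
  hNIpos : ∀ k j u, ∀ᵐ ω ∂μ, 1 ≤ NI k j u ω
  /-- `P_ξ(N = 1) < 1` a.s. -/
  hNone : ∀ u, ∀ᵐ ω ∂μ,
    (μ[fun ω' => if Nx u ω' = 1 then (1 : ℝ) else 0|𝔈.σalg]) ω < 1
  /-- `E_ξ Σ_{i≤N} L_i = 0` a.s. -/
  hLzero : ∀ u, (μ[fun ω => ∑ i ∈ Finset.range (Nx u ω), Lx u i ω|𝔈.σalg]) =ᵐ[μ] 0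
  /-- supercriticality: `E log m_0 > 0` -/
  hsuper : 0 < ∫ ω, Real.log (m0 0 ω) ∂μ
  /-- stationarity of the immigration data -/
  hYstat : ∀ n, μ.map (fun ω => ((V n ω, fun i => SI n i ω) : ℕ × (ℕ → ℝ)))
      = μ.map (fun ω => ((V 0 ω, fun i => SI 0 i ω) : ℕ × (ℕ → ℝ)))
  /-- given the environment, all the reproduction and immigration random vectors
  are independent -/
  hindep : iCondIndepFun 𝔈.σalg (hEG.trans hGF)
      (Sum.elim (fun (u : List ℕ) ω => ((Nx u ω, fun i => Lx u i ω) : ℕ × (ℕ → ℝ)))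
        (Sum.elim (fun (n : ℕ) ω => ((V n ω, fun i => SI n i ω) : ℕ × (ℕ → ℝ)))
          (fun (p : ℕ × ℕ × List ℕ) ω =>
            ((NI p.1 p.2.1 p.2.2 ω, fun i => LI p.1 p.2.1 p.2.2 i ω) : ℕ × (ℕ → ℝ))))) μ

namespace BRWIRE

variable {Ω : Type} [MeasurableSpace Ω] [StandardBorelSpace Ω]
  {μ : Measure Ω} [IsFiniteMeasure μ]

/-- the σ-algebra generated by the environment `ξ` -/
def mE (X : BRWIRE Ω μ) : MeasurableSpace Ω := X.𝔈.σalg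

/-- the σ-algebra generated by the environment `ξ` and the immigration sequence `Y` -/
def mG (X : BRWIRE Ω μ) : MeasurableSpace Ω := X.𝔊.σalg

/-- `𝕋ₙ^X`: the generation-`n` particles of the tree of the initial particle. -/
def tree (X : BRWIRE Ω μ) : ℕ → Ω → Finset (List ℕ)
  | 0, _ => {[]}
  | n + 1, ω => (X.tree n ω).biUnion fun u => (Finset.range (X.Nx u ω)).image fun i => i :: u

/-- position `S_u` of the particle `u` of the tree of the initial particle -/
def pos (X : BRWIRE Ω μ) : List ℕ → Ω → ℝ
  | [], _ => 0
  | i :: u, ω => X.pos u ω + X.Lx u i ω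

/-- generation-`n` particles of the subtree of the immigrant `0_k j` -/
def treeI (X : BRWIRE Ω μ) (k j : ℕ) : ℕ → Ω → Finset (List ℕ)
  | 0, _ => {[]}
  | n + 1, ω => (X.treeI k j n ω).biUnion fun u =>
      (Finset.range (X.NI k j u ω)).image fun i => i :: u

/-- position, relative to `S_{0_k j}`, of the particle `u` of the subtree of `0_k j` -/
def posI (X : BRWIRE Ω μ) (k j : ℕ) : List ℕ → Ω → ℝ
  | [], _ => 0
  | i :: u, ω => X.posI k j u ω + X.LI k j u i ω

/-- `m_n(t) = m_0(t) ∘ θ^[n]` -/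
def mfun (X : BRWIRE Ω μ) (n : ℕ) (t : ℝ) (ω : Ω) : ℝ := X.m0 t (X.θ^[n] ω)

/-- `σ_n² = σ_0² ∘ θ^[n]` -/
def sigmaSq (X : BRWIRE Ω μ) (n : ℕ) (ω : Ω) : ℝ := X.s0 (X.θ^[n] ω)

/-- `b_n = (Σ_{i<n} σ_i²)^{1/2}` -/
def bfun (X : BRWIRE Ω μ) (n : ℕ) (ω : Ω) : ℝ :=
  Real.sqrt (∑ i ∈ Finset.range n, X.sigmaSq i ω)

/-- `Π_n(t) = Π_{i<n} m_i(t)` -/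
def Pifun (X : BRWIRE Ω μ) (n : ℕ) (t : ℝ) (ω : Ω) : ℝ :=
  ∏ i ∈ Finset.range n, X.mfun i t ω

/-- `Y_n(t) = Σ_{i≤V_n} e^{t S_{0_n i}}` -/
def Yfun (X : BRWIRE Ω μ) (n : ℕ) (t : ℝ) (ω : Ω) : ℝ :=
  ∑ i ∈ Finset.range (X.V n ω), Real.exp (t * X.SI n i ω)

/-- `Z̄_n(t) = Σ_{u ∈ 𝕋ₙ^X} e^{t S_u}` -/
def Zbar (X : BRWIRE Ω μ) (n : ℕ) (t : ℝ) (ω : Ω) : ℝ :=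
  ∑ u ∈ X.tree n ω, Real.exp (t * X.pos u ω)

/-- `Z̃_n(t) = Σ_{u ∈ 𝕋ₙ} e^{t S_u}`, the sum running over all generation-`n`
particles: descendants of `∅` and descendants of the immigrants -/
def Zt (X : BRWIRE Ω μ) (n : ℕ) (t : ℝ) (ω : Ω) : ℝ :=
  X.Zbar n t ω + ∑ k ∈ Finset.range n, ∑ j ∈ Finset.range (X.V k ω),
    ∑ u ∈ X.treeI k j (n - (k + 1)) ω, Real.exp (t * (X.SI k j ω + X.posI k j u ω))

/-- the counting measure `Z_n(⬝) = Σ_{u ∈ 𝕋ₙ} δ_{S_u}(⬝)` -/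
def Zmeas (X : BRWIRE Ω μ) (n : ℕ) (ω : Ω) : Measure ℝ :=
  (∑ u ∈ X.tree n ω, Measure.dirac (X.pos u ω)) +
    ∑ k ∈ Finset.range n, ∑ j ∈ Finset.range (X.V k ω),
      ∑ u ∈ X.treeI k j (n - (k + 1)) ω, Measure.dirac (X.SI k j ω + X.posI k j u ω)

/-- `W_n(t) = Z̃_n(t)/Π_n(t)` -/
def Wfun (X : BRWIRE Ω μ) (n : ℕ) (t : ℝ) (ω : Ω) : ℝ := X.Zt n t ω / X.Pifun n t ω

/-- `W̄_n(t) = Z̄_n(t)/Π_n(t)` -/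
def Wbar (X : BRWIRE Ω μ) (n : ℕ) (t : ℝ) (ω : Ω) : ℝ := X.Zbar n t ω / X.Pifun n t ω

/-- `W̄_m(0_k j, t)`: the normalized partition function of generation `m` of the
branching random walk (without immigration) originating from the immigrant `0_k j`
(a particle of generation `k+1`), normalized by `Π_{l=k+1}^{k+m} m_l(t)`. -/
def WbarI (X : BRWIRE Ω μ) (k j m : ℕ) (t : ℝ) (ω : Ω) : ℝ :=
  (∑ u ∈ X.treeI k j m ω, Real.exp (t * X.posI k j u ω)) /
    ∏ l ∈ Finset.Ico (k + 1) (k + 1 + m), X.mfun l t ω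

/-- `Λ(t) = E log m_0(t)` -/
def Lambda (X : BRWIRE Ω μ) (t : ℝ) : ℝ := ∫ ω, Real.log (X.m0 t ω) ∂μ

/-- `t₋ = inf {t : t Λ'(t) - Λ(t) ≤ 0}` (as an extended real number) -/
def tminus (X : BRWIRE Ω μ) : EReal :=
  sInf ((fun t : ℝ => (t : EReal)) '' {t : ℝ | t * deriv X.Lambda t - X.Lambda t ≤ 0})

/-- `t₊ = sup {t : t Λ'(t) - Λ(t) ≤ 0}` (as an extended real number) -/
def tplus (X : BRWIRE Ω μ) : EReal :=
  sSup ((fun t : ℝ => (t : EReal)) '' {t : ℝ | t * deriv X.Lambda t - X.Lambda t ≤ 0})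

/-- `t₁ = inf {t : Λ(t) < 0}` (as an extended real number) -/
def t1 (X : BRWIRE Ω μ) : EReal :=
  sInf ((fun t : ℝ => (t : EReal)) '' {t : ℝ | X.Lambda t < 0})

/-- `t₂ = sup {t : Λ(t) < 0}` (as an extended real number) -/
def t2 (X : BRWIRE Ω μ) : EReal :=
  sSup ((fun t : ℝ => (t : EReal)) '' {t : ℝ | X.Lambda t < 0})

/-- `Λ̄(t)`: equals `Λ(t)` on `(t₋, t₊)`, `t Λ'(t₊)` for `t ≥ t₊` and
`t Λ'(t₋)` for `t ≤ t₋`. -/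
def LambdaBar (X : BRWIRE Ω μ) (t : ℝ) : ℝ :=
  if X.tplus ≤ (t : EReal) then t * deriv X.Lambda X.tplus.toReal
  else if (t : EReal) ≤ X.tminus then t * deriv X.Lambda X.tminus.toReal
  else X.Lambda t

/-- `Λ̃(t) = max {Λ̄(t), 0}` -/
def LambdaTilde (X : BRWIRE Ω μ) (t : ℝ) : ℝ := max (X.LambdaBar t) 0

/-- the Legendre transform `Λ̃*(x) = sup_t {xt - Λ̃(t)}` (with values in `EReal`) -/
def LambdaStar (X : BRWIRE Ω μ) (x : ℝ) : EReal :=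
  ⨆ t : ℝ, ((x * t - X.LambdaTilde t : ℝ) : EReal)

/-- Assumption (H1): `E|L_1| < ∞`, `E|log m_0(t)| < ∞`, `E|m_0'(t)/m_0(t)| < ∞` and
`E|log Y_0(t)| < ∞` for all `t ∈ ℝ`. -/
def H1 (X : BRWIRE Ω μ) : Prop :=
  Integrable (fun ω => |X.Lx [] 0 ω|) μ ∧
  (∀ t : ℝ, Integrable (fun ω => |Real.log (X.m0 t ω)|) μ) ∧
  (∀ t : ℝ, Integrable (fun ω => |deriv (fun s => X.m0 s ω) t / X.m0 t ω|) μ) ∧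
  (∀ t : ℝ, Integrable (fun ω => |Real.log (X.Yfun 0 t ω)|) μ)

/-- Case II: `t₁ < t₋ < t₂ < 0`. -/
def CaseII (X : BRWIRE Ω μ) : Prop :=
  X.t1 < X.tminus ∧ X.tminus < X.t2 ∧ X.t2 < (0 : EReal)

/-- Case III: `0 < t₁ < t₊ < t₂`. -/
def CaseIII (X : BRWIRE Ω μ) : Prop :=
  (0 : EReal) < X.t1 ∧ X.t1 < X.tplus ∧ X.tplus < X.t2

/-- the natural filtration generated by the branching process -/
def natFiltration (X : BRWIRE Ω μ) (n : ℕ) : MeasurableSpace Ω :=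
  (⨆ (u : List ℕ) (_ : u.length + 1 ≤ n),
      (MeasurableSpace.comap (X.Nx u) inferInstance ⊔
        ⨆ i : ℕ, MeasurableSpace.comap (X.Lx u i) inferInstance)) ⊔
  (⨆ (k : ℕ) (_ : k + 1 ≤ n),
      (MeasurableSpace.comap (X.V k) inferInstance ⊔
        ⨆ i : ℕ, MeasurableSpace.comap (X.SI k i) inferInstance)) ⊔
  (⨆ (k : ℕ) (j : ℕ) (u : List ℕ) (_ : k + 1 + u.length + 1 ≤ n),
      (MeasurableSpace.comap (X.NI k j u) inferInstance ⊔
        ⨆ i : ℕ, MeasurableSpace.comap (X.LI k j u i) inferInstance))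

/-- `Ψ_n(τ) = Π_n^{-1} Σ_{u ∈ 𝕋ₙ} e^{i τ S_u}`, the characteristic function of the
measure `Π_n^{-1} Z_n` -/
def Psi (X : BRWIRE Ω μ) (n : ℕ) (τ : ℝ) (ω : Ω) : ℂ :=
  ((X.Pifun n 0 ω : ℝ) : ℂ)⁻¹ *
    ∫ x : ℝ, Complex.exp (Complex.I * (τ : ℂ) * (x : ℂ)) ∂(X.Zmeas n ω)

/-- `Y_{k-1}(t)`, with the convention `Y_{-1}(t) = 1`. -/
def Yext (X : BRWIRE Ω μ) (k : ℕ) (t : ℝ) (ω : Ω) : ℝ :=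
  if k = 0 then 1 else X.Yfun (k - 1) t ω

/-- `γ_{k,n}(p,t) = Π_{i=k}^{n-1} m_i(t)^{-1} m_i(pt)^{1/p}` -/
def gam (X : BRWIRE Ω μ) (k n : ℕ) (p t : ℝ) (ω : Ω) : ℝ :=
  ∏ i ∈ Finset.Ico k n, (X.mfun i t ω)⁻¹ * X.mfun i (p * t) ω ^ (1 / p)

/-- `E_{T^n ξ} |W̄_1(t) - 1|^p`: the quenched `p`-th moment of
`W̄_1(t) - 1 = Σ_{i≤N(u)} e^{t L_i(u)}/m_n(t) - 1` for a particle `u` of generation `n`. -/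
def oneStep (X : BRWIRE Ω μ) (n : ℕ) (t p : ℝ) (ω : Ω) : ℝ≥0∞ :=
  ∫⁻ ω', ENNReal.ofReal
      |(∑ i ∈ Finset.range (X.Nx (List.replicate n 0) ω'),
          Real.exp (t * X.Lx (List.replicate n 0) i ω')) / X.mfun n t ω - 1| ^ p
    ∂(condExpKernel μ X.mE ω)

end BRWIRE

/-!
Since `Π_{n+1}(t) = Π_n(t) m_n(t)`, we have
`(1/n) log (Π_{n+1}(t)⁻¹ Y_n(t)) ≤ (1/n) log⁺ (Y_n(t)/m_n(t)) - (1/n) log Π_n(t)`.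
The last term is a Birkhoff average of `log m₀(t)` along the ergodic shift, so it tends to
`Λ(t)` by Birkhoff's ergodic theorem, which follows from Garsia's maximal lemma. The first
term tends to `0` almost surely: `log⁺ (Y_n/m_n) ≤ log⁺ Y_n + log⁺ m_n⁻¹`, and each summand
is a sequence of identically distributed integrable variables, hence `o(n)` by Borel–Cantelli.
-/

theorem logPlus_nonneg (x : ℝ) : 0 ≤ logPlus x := le_max_right _ _

theorem log_le_logPlus (x : ℝ) : Real.log x ≤ logPlus x := le_max_left _ _

theorem measurable_logPlus : Measurable logPlus := Real.measurable_log.max measurable_const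

theorem logPlus_le_abs_log (x : ℝ) : logPlus x ≤ |Real.log x| :=
  max_le (le_abs_self _) (abs_nonneg _)

theorem logPlus_inv_le_abs_log (x : ℝ) : logPlus x⁻¹ ≤ |Real.log x| := by
  simpa only [Real.log_inv, abs_neg] using logPlus_le_abs_log x⁻¹

theorem logPlus_mul_le (a b : ℝ) : logPlus (a * b) ≤ logPlus a + logPlus b := by
  refine max_le ?_ (add_nonneg (logPlus_nonneg a) (logPlus_nonneg b))
  rcases eq_or_ne a 0 with rfl | ha
  · simpa using add_nonneg (logPlus_nonneg 0) (logPlus_nonneg b)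
  rcases eq_or_ne b 0 with rfl | hb
  · simpa using add_nonneg (logPlus_nonneg a) (logPlus_nonneg 0)
  rw [Real.log_mul ha hb]
  exact add_le_add (log_le_logPlus a) (log_le_logPlus b)

theorem elog_ofReal_mul_le {a : ℝ} (ha : 0 < a) (y : ℝ) :
    elog (ENNReal.ofReal (a * y)) ≤ ((Real.log a + logPlus y : ℝ) : EReal) := by
  rcases le_or_gt y 0 with hy | hy
  · simp [elog, ENNReal.ofReal_of_nonpos (mul_nonpos_of_nonneg_of_nonpos ha.le hy)]
  have hay : 0 < a * y := mul_pos ha hy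
  rw [elog, if_neg (ENNReal.ofReal_pos.2 hay).ne', if_neg ENNReal.ofReal_ne_top,
    ENNReal.toReal_ofReal hay.le, Real.log_mul ha.ne' hy.ne']
  exact EReal.coe_le_coe_iff.2 (add_le_add le_rfl (log_le_logPlus y))

section BorelCantelli

variable {α : Type*} [MeasurableSpace α] {μ : Measure α} [IsProbabilityMeasure μ]

theorem ae_eventually_abs_le_mul_of_identDistrib {f : ℕ → α → ℝ} {g : α → ℝ}
    (hfg : ∀ n, IdentDistrib (f n) g μ μ) (hg : Integrable g μ) {ε : ℝ} (hε : 0 < ε) :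
    ∀ᵐ x ∂μ, ∀ᶠ n : ℕ in atTop, |f n x| ≤ ε * n := by
  have hmeas : ∀ n : ℕ, μ {x | ε * n < |f n x|} = μ {x | |g x| / ε ∈ Ioi (n : ℝ)} := by
    intro n
    have := ((hfg n).comp measurable_abs).measure_mem_eq (measurableSet_Ioi (a := ε * n))
    simpa [Set.preimage, mem_Ioi, lt_div_iff₀ hε, mul_comm] using this
  have hsum : ∑' n : ℕ, μ {x | ε * n < |f n x|} ≠ ⊤ := by
    -- `tsum_prob_mem_Ioi_lt_top` is stated for `volume`.
    let : MeasureSpace α := ⟨μ⟩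
    simp_rw [hmeas]
    exact (tsum_prob_mem_Ioi_lt_top (hg.abs.div_const ε)
      fun x => div_nonneg (abs_nonneg _) hε.le).ne
  filter_upwards [ae_eventually_notMem hsum] with x hx
  filter_upwards [hx] with n hn
  exact not_lt.1 hn

theorem ae_tendsto_inv_mul_of_identDistrib {f : ℕ → α → ℝ} {g : α → ℝ}
    (hfg : ∀ n, IdentDistrib (f n) g μ μ) (hg : Integrable g μ) :
    ∀ᵐ x ∂μ, Tendsto (fun n : ℕ => (n : ℝ)⁻¹ * f n x) atTop (𝓝 0) := by
  have hbound : ∀ᵐ x ∂μ, ∀ k : ℕ, ∀ᶠ n : ℕ in atTop, |f n x| ≤ 1 / (k + 1) * n :=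
    ae_all_iff.2 fun k => ae_eventually_abs_le_mul_of_identDistrib hfg hg (by positivity)
  filter_upwards [hbound] with x hx
  refine Metric.tendsto_nhds.2 fun ε hε => ?_
  obtain ⟨k, hk⟩ := exists_nat_one_div_lt hε
  filter_upwards [hx k, eventually_gt_atTop 0] with n hn hn0
  have hnpos : (0 : ℝ) < n := Nat.cast_pos.2 hn0
  rw [Real.dist_eq, sub_zero, abs_mul, abs_inv, Nat.abs_cast, inv_mul_lt_iff₀ hnpos]
  calc |f n x| ≤ 1 / (k + 1) * n := hn
    _ < n * ε := by rw [mul_comm]; exact mul_lt_mul_of_pos_left hk hnpos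

end BorelCantelli

section Birkhoff

variable {α : Type*} {T : α → α} {g : α → ℝ}

theorem partialSups_birkhoffSum_le (n : ℕ) (x : α) :
    partialSups (birkhoffSum T g) n x ≤ max 0 (g x + partialSups (birkhoffSum T g) n (T x)) := by
  rw [Pi.partialSups_apply]
  refine partialSups_le _ _ _ fun k hk => ?_
  cases k with
  | zero => exact le_max_left _ _
  | succ j =>
    rw [birkhoffSum_succ']
    exact le_max_of_le_right
      (add_le_add le_rfl (le_partialSups_of_le (birkhoffSum T g) (by omega : j ≤ n) (T x)))

theorem partialSups_birkhoffSum_nonneg (n : ℕ) (x : α) :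
    0 ≤ partialSups (birkhoffSum T g) n x :=
  le_partialSups_of_le (birkhoffSum T g) (Nat.zero_le n) x

theorem bddAbove_range_birkhoffSum_comp_iff (x : α) :
    BddAbove (range fun n => birkhoffSum T g n (T x)) ↔
      BddAbove (range fun n => birkhoffSum T g n x) := by
  simp only [bddAbove_def, forall_mem_range]
  constructor
  · rintro ⟨K, hK⟩
    refine ⟨max 0 (g x + K), fun n => ?_⟩
    cases n with
    | zero => simp
    | succ n => exact le_max_of_le_right (by rw [birkhoffSum_succ']; linarith [hK n])
  · rintro ⟨K, hK⟩
    exact ⟨K - g x, fun n => by linarith [hK (n + 1), birkhoffSum_succ' T g n x]⟩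

variable [MeasurableSpace α] {μ : Measure α}

theorem measurable_birkhoffSum (hT : Measurable T) (hg : Measurable g) (n : ℕ) :
    Measurable (birkhoffSum T g n) :=
  Finset.measurable_sum _ fun i _ => hg.comp (hT.iterate i)

theorem MeasureTheory.MeasurePreserving.integrable_birkhoffSum (hT : MeasurePreserving T μ μ)
    (hg : Integrable g μ) (n : ℕ) : Integrable (birkhoffSum T g n) μ :=
  integrable_finsetSum _ fun i _ => (hT.iterate i).integrable_comp_of_integrable hg

theorem measurable_partialSups {f : ℕ → α → ℝ} (hf : ∀ n, Measurable (f n)) (n : ℕ) :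
    Measurable (partialSups f n) := by
  induction n with
  | zero => simpa using hf 0
  | succ n ih => simpa [partialSups_succ] using ih.sup (hf (n + 1))

theorem integrable_partialSups {f : ℕ → α → ℝ} (hf : ∀ n, Integrable (f n) μ) (n : ℕ) :
    Integrable (partialSups f n) μ := by
  induction n with
  | zero => simpa using hf 0
  | succ n ih => simpa [partialSups_succ] using ih.sup (hf (n + 1))

theorem MeasureTheory.MeasurePreserving.setIntegral_nonneg_of_partialSups_birkhoffSum_pos
    (hT : MeasurePreserving T μ μ) (hgm : Measurable g) (hg : Integrable g μ) (n : ℕ) :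
    0 ≤ ∫ x in {x | 0 < partialSups (birkhoffSum T g) n x}, g x ∂μ := by
  set M := partialSups (birkhoffSum T g) n
  set A := {x | 0 < M x}
  have hMm : Measurable M := measurable_partialSups (measurable_birkhoffSum hT.measurable hgm) n
  have hMi : Integrable M μ := integrable_partialSups (hT.integrable_birkhoffSum hg) n
  have hMT : Integrable (fun x => M (T x)) μ := hT.integrable_comp_of_integrable hMi
  have hle : ∀ x ∈ A, M x - M (T x) ≤ g x := by
    intro x (hx : 0 < M x)
    have := (le_max_iff.1 (partialSups_birkhoffSum_le n x)).resolve_left (not_le.2 hx)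
    linarith
  have hoff : ∀ x ∉ A, M x = 0 := fun x hx =>
    le_antisymm (not_lt.1 hx) (partialSups_birkhoffSum_nonneg n x)
  calc (0 : ℝ) = ∫ x, M x ∂μ - ∫ x, M (T x) ∂μ := by
        rw [← integral_map hT.measurable.aemeasurable hMm.aestronglyMeasurable, hT.map_eq,
          sub_self]
    _ ≤ ∫ x in A, M x ∂μ - ∫ x in A, M (T x) ∂μ := by
        rw [setIntegral_eq_integral_of_forall_compl_eq_zero hoff]
        exact sub_le_sub_left (setIntegral_le_integral hMT
          (Eventually.of_forall fun x => partialSups_birkhoffSum_nonneg n (T x))) _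
    _ = ∫ x in A, (M x - M (T x)) ∂μ := (integral_sub hMi.integrableOn hMT.integrableOn).symm
    _ ≤ ∫ x in A, g x ∂μ :=
        setIntegral_mono_on (hMi.sub hMT).integrableOn hg.integrableOn
          (measurableSet_lt measurable_const hMm) hle

theorem MeasureTheory.MeasurePreserving.setIntegral_nonneg_of_exists_birkhoffSum_pos
    (hT : MeasurePreserving T μ μ) (hgm : Measurable g) (hg : Integrable g μ) :
    0 ≤ ∫ x in {x | ∃ n, 0 < birkhoffSum T g n x}, g x ∂μ := by
  set A : ℕ → Set α := fun n => {x | 0 < partialSups (birkhoffSum T g) n x}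
  have hAm : ∀ n, MeasurableSet (A n) := fun n => measurableSet_lt measurable_const
    (measurable_partialSups (measurable_birkhoffSum hT.measurable hgm) n)
  have hmono : Monotone A := fun m n hmn x (hx : 0 < _) =>
    hx.trans_le ((partialSups (birkhoffSum T g)).monotone hmn x)
  have hUnion : {x | ∃ n, 0 < birkhoffSum T g n x} = ⋃ n, A n := by
    ext x
    simp only [mem_iUnion, A, Pi.partialSups_apply]
    constructor
    · rintro ⟨n, hn⟩
      exact ⟨n, hn.trans_le (le_partialSups (birkhoffSum T g · x) n)⟩
    · rintro ⟨n, hn⟩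
      obtain ⟨j, -, hj⟩ := exists_partialSups_eq (birkhoffSum T g · x) n
      exact ⟨j, hj ▸ hn⟩
  rw [hUnion]
  exact ge_of_tendsto' (tendsto_setIntegral_of_monotone hAm hmono hg.integrableOn)
    (hT.setIntegral_nonneg_of_partialSups_birkhoffSum_pos hgm hg)

theorem Ergodic.ae_bddAbove_birkhoffSum (hT : Ergodic T μ) (hgm : Measurable g)
    (hg : Integrable g μ) (hneg : ∫ x, g x ∂μ < 0) :
    ∀ᵐ x ∂μ, BddAbove (range fun n => birkhoffSum T g n x) := by
  set B := {x | BddAbove (range fun n => birkhoffSum T g n x)}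
  have hBm : MeasurableSet B :=
    measurableSet_bddAbove_range (measurable_birkhoffSum hT.measurable hgm)
  have hBinv : T ⁻¹' B = B := by
    ext x
    exact bddAbove_range_birkhoffSum_comp_iff x
  -- If the invariant set `Bᶜ` of unbounded Birkhoff sums had full measure, Garsia's lemma
  -- would force `0 ≤ ∫ g`.
  rcases hT.measure_self_or_compl_eq_zero hBm hBinv with h | h
  · have hpos : ∀ᵐ x ∂μ, x ∈ {x | ∃ n, 0 < birkhoffSum T g n x} := by
      filter_upwards [measure_eq_zero_iff_ae_notMem.1 h] with x hx
      show ∃ n, 0 < birkhoffSum T g n x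
      by_contra! hle
      exact hx ⟨0, forall_mem_range.2 hle⟩
    have := hT.toMeasurePreserving.setIntegral_nonneg_of_exists_birkhoffSum_pos hgm hg
    rw [Measure.restrict_eq_self_of_ae_mem hpos] at this
    exact absurd this (not_le.2 hneg)
  · filter_upwards [measure_eq_zero_iff_ae_notMem.1 h] with x hx using notMem_compl_iff.1 hx

theorem Ergodic.ae_eventually_lt_birkhoffAverage [IsProbabilityMeasure μ] (hT : Ergodic T μ)
    (hgm : Measurable g) (hg : Integrable g μ) {d : ℝ} (hd : d < ∫ x, g x ∂μ) :
    ∀ᵐ x ∂μ, ∀ᶠ n in atTop, d < birkhoffAverage ℝ T g n x := by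
  obtain ⟨c, hdc, hcI⟩ := exists_between hd
  have hbdd := hT.ae_bddAbove_birkhoffSum (g := fun x => c - g x)
    (measurable_const.sub hgm) ((integrable_const c).sub hg)
    (by rw [integral_sub (integrable_const c) hg, integral_const]; simp; linarith)
  filter_upwards [hbdd] with x ⟨K, hK⟩
  have hlim : Tendsto (fun n : ℕ => c - K * (n : ℝ)⁻¹) atTop (𝓝 (c - K * 0)) :=
    tendsto_const_nhds.sub (tendsto_const_nhds.mul tendsto_inv_atTop_nhds_zero_nat)
  filter_upwards [hlim.eventually (lt_mem_nhds (show d < c - K * 0 by simpa using hdc)),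
    eventually_gt_atTop 0] with n hn hn0
  refine hn.trans_le ?_
  have hSn : birkhoffSum T (fun x => c - g x) n x = n * c - birkhoffSum T g n x := by
    simp [birkhoffSum, Finset.sum_sub_distrib]
  have hKn : n * c - birkhoffSum T g n x ≤ K := hSn ▸ hK (mem_range_self n)
  have hnpos : (0 : ℝ) < n := Nat.cast_pos.2 hn0
  rw [birkhoffAverage, smul_eq_mul]
  field_simp
  linarith

theorem Ergodic.ae_forall_lt_eventually_lt_birkhoffAverage [IsProbabilityMeasure μ]
    (hT : Ergodic T μ) (hgm : Measurable g) (hg : Integrable g μ) :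
    ∀ᵐ x ∂μ, ∀ d < ∫ x, g x ∂μ, ∀ᶠ n in atTop, d < birkhoffAverage ℝ T g n x := by
  have hrat : ∀ᵐ x ∂μ, ∀ q : ℚ, (q : ℝ) < ∫ x, g x ∂μ →
      ∀ᶠ n in atTop, (q : ℝ) < birkhoffAverage ℝ T g n x := by
    refine ae_all_iff.2 fun q => ?_
    by_cases hq : (q : ℝ) < ∫ x, g x ∂μ
    · filter_upwards [hT.ae_eventually_lt_birkhoffAverage hgm hg hq] with x hx using fun _ => hx
    · exact ae_of_all _ fun x h => absurd h hq
  filter_upwards [hrat] with x hx d hd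
  obtain ⟨q, hdq, hq⟩ := exists_rat_btwn hd
  filter_upwards [hx q hq] with n hn using hdq.trans hn

theorem Ergodic.ae_tendsto_birkhoffAverage [IsProbabilityMeasure μ] (hT : Ergodic T μ)
    (hgm : Measurable g) (hg : Integrable g μ) :
    ∀ᵐ x ∂μ, Tendsto (birkhoffAverage ℝ T g · x) atTop (𝓝 (∫ x, g x ∂μ)) := by
  filter_upwards [hT.ae_forall_lt_eventually_lt_birkhoffAverage hgm hg,
    hT.ae_forall_lt_eventually_lt_birkhoffAverage hgm.neg hg.neg] with x hlow hupp
  refine tendsto_order.2 ⟨hlow, fun a ha => ?_⟩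
  filter_upwards [hupp (-a) (by rw [integral_neg']; exact neg_lt_neg ha)] with n hn
  rw [birkhoffAverage_neg] at hn
  exact neg_lt_neg_iff.1 hn

end Birkhoff

namespace BRWIRE

variable {Ω : Type} [MeasurableSpace Ω] [StandardBorelSpace Ω] {μ : Measure Ω}
  [IsFiniteMeasure μ] (X : BRWIRE Ω μ)

theorem measurable_m0 (t : ℝ) : Measurable (X.m0 t) :=
  (X.measm0 t).mono (X.hEG.trans X.hGF) le_rfl

theorem measurable_immigrants (n : ℕ) :
    Measurable fun ω => ((X.V n ω, fun i => X.SI n i ω) : ℕ × (ℕ → ℝ)) :=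
  ((X.measV n).mono X.hGF le_rfl).prodMk
    (measurable_pi_lambda _ fun i => (X.measSI n i).mono X.hGF le_rfl)

theorem measurable_sum_exp (t : ℝ) :
    Measurable fun p : ℕ × (ℕ → ℝ) => ∑ i ∈ Finset.range p.1, Real.exp (t * p.2 i) :=
  measurable_from_prod_countable_right fun k =>
    Finset.measurable_sum (Finset.range k) fun i _ => by fun_prop

theorem measurable_Yfun (n : ℕ) (t : ℝ) : Measurable (X.Yfun n t) :=
  (measurable_sum_exp t).comp (X.measurable_immigrants n)

theorem identDistrib_Yfun (n : ℕ) (t : ℝ) : IdentDistrib (X.Yfun n t) (X.Yfun 0 t) μ μ :=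
  (IdentDistrib.mk (X.measurable_immigrants n).aemeasurable
    (X.measurable_immigrants 0).aemeasurable (X.hYstat n)).comp (measurable_sum_exp t)

theorem identDistrib_mfun (n : ℕ) (t : ℝ) : IdentDistrib (X.mfun n t) (X.m0 t) μ μ := by
  have hθn := X.hθ.toMeasurePreserving.iterate n
  exact (IdentDistrib.mk hθn.measurable.aemeasurable aemeasurable_id
    (by rw [hθn.map_eq, Measure.map_id])).comp (X.measurable_m0 t)

/-- `Λ(t)` is a Bochner integral, hence `0` unless `log m₀(t)` is integrable. -/
theorem integrable_log_m0 {t : ℝ} (hΛ : X.Lambda t ≠ 0) :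
    Integrable (fun ω => Real.log (X.m0 t ω)) μ := by
  by_contra h
  exact hΛ (integral_undef h)

theorem Pifun_pos (n : ℕ) (t : ℝ) (ω : Ω) : 0 < X.Pifun n t ω :=
  Finset.prod_pos fun _ _ => X.m0pos t _

theorem Pifun_succ (n : ℕ) (t : ℝ) (ω : Ω) :
    X.Pifun (n + 1) t ω = X.Pifun n t ω * X.mfun n t ω :=
  Finset.prod_range_succ _ _

theorem log_Pifun (n : ℕ) (t : ℝ) (ω : Ω) :
    Real.log (X.Pifun n t ω) = birkhoffSum X.θ (fun ω => Real.log (X.m0 t ω)) n ω :=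
  Real.log_prod fun _ _ => (X.m0pos t _).ne'

theorem inv_mul_elog_le (n : ℕ) (t : ℝ) (ω : Ω) :
    (((n : ℝ)⁻¹ : ℝ) : EReal) * elog (ENNReal.ofReal ((X.Pifun (n + 1) t ω)⁻¹ * X.Yfun n t ω))
      ≤ (((n : ℝ)⁻¹ * logPlus (X.Yfun n t ω / X.mfun n t ω)
          - birkhoffAverage ℝ X.θ (fun ω => Real.log (X.m0 t ω)) n ω : ℝ) : EReal) := by
  have hsplit : (X.Pifun (n + 1) t ω)⁻¹ * X.Yfun n t ω
      = (X.Pifun n t ω)⁻¹ * (X.Yfun n t ω / X.mfun n t ω) := by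
    rw [Pifun_succ]
    ring
  calc (((n : ℝ)⁻¹ : ℝ) : EReal) * elog (ENNReal.ofReal ((X.Pifun (n + 1) t ω)⁻¹ * X.Yfun n t ω))
      ≤ (((n : ℝ)⁻¹ : ℝ) : EReal) *
          ((Real.log (X.Pifun n t ω)⁻¹ + logPlus (X.Yfun n t ω / X.mfun n t ω) : ℝ) : EReal) := by
        rw [hsplit]
        exact mul_le_mul_of_nonneg_left (elog_ofReal_mul_le (inv_pos.2 (X.Pifun_pos n t ω)) _)
          (EReal.coe_nonneg.2 (by positivity))
    _ = _ := by
        rw [← EReal.coe_mul, Real.log_inv, log_Pifun, birkhoffAverage, smul_eq_mul]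
        ring_nf

theorem ae_tendsto_inv_mul_logPlus_Yfun_div_mfun [IsProbabilityMeasure μ] {t : ℝ}
    (hlog : Integrable (fun ω => Real.log (X.m0 t ω)) μ)
    (hY : Integrable (fun ω => logPlus (X.Yfun 0 t ω / X.m0 t ω)) μ) :
    ∀ᵐ ω ∂μ, Tendsto (fun n : ℕ => (n : ℝ)⁻¹ * logPlus (X.Yfun n t ω / X.mfun n t ω))
      atTop (𝓝 0) := by
  have hlogY : Integrable (fun ω => logPlus (X.Yfun 0 t ω)) μ := by
    refine (hY.add hlog.abs).mono'
      (measurable_logPlus.comp (X.measurable_Yfun 0 t)).aestronglyMeasurable (ae_of_all _ ?_)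
    intro ω
    rw [Real.norm_of_nonneg (logPlus_nonneg _)]
    calc logPlus (X.Yfun 0 t ω)
        = logPlus (X.Yfun 0 t ω / X.m0 t ω * X.m0 t ω) := by
          rw [div_mul_cancel₀ _ (X.m0pos t ω).ne']
      _ ≤ logPlus (X.Yfun 0 t ω / X.m0 t ω) + |Real.log (X.m0 t ω)| :=
          (logPlus_mul_le _ _).trans (add_le_add le_rfl (logPlus_le_abs_log _))
  have hlogm : Integrable (fun ω => logPlus (X.m0 t ω)⁻¹) μ := by
    refine hlog.abs.mono' (measurable_logPlus.comp (X.measurable_m0 t).inv).aestronglyMeasurable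
      (ae_of_all _ fun ω => ?_)
    rw [Real.norm_of_nonneg (logPlus_nonneg _)]
    exact logPlus_inv_le_abs_log _
  filter_upwards [ae_tendsto_inv_mul_of_identDistrib
      (fun n => (X.identDistrib_Yfun n t).comp measurable_logPlus) hlogY,
    ae_tendsto_inv_mul_of_identDistrib
      (fun n => (X.identDistrib_mfun n t).comp (measurable_logPlus.comp measurable_inv)) hlogm]
    with ω hYn hmn
  refine squeeze_zero (fun n => mul_nonneg (by positivity) (logPlus_nonneg _)) (fun n => ?_)
    (by simpa using hYn.add hmn)
  rw [← mul_add, div_eq_mul_inv]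
  exact mul_le_mul_of_nonneg_left (logPlus_mul_le _ _) (by positivity)

end BRWIRE

/-- **Exponential decay of the normalized immigration contribution**: if `Λ(t) > 0` and
`E log⁺(Y₀(t)/m₀(t)) < ∞`, then almost surely
`limsup (1/n) log (Π_{n+1}(t)⁻¹ Yₙ(t)) ≤ -Λ(t)`. -/
theorem BRWIRE.immigration_decay {Ω : Type} [MeasurableSpace Ω] [StandardBorelSpace Ω]
    {μ : Measure Ω} [IsProbabilityMeasure μ] (X : BRWIRE Ω μ) (t : ℝ) (hΛ : 0 < X.Lambda t)
    (hY : Integrable (fun ω => logPlus (X.Yfun 0 t ω / X.m0 t ω)) μ) :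
    ∀ᵐ ω ∂μ,
      limsup (fun n : ℕ => (((n : ℝ)⁻¹ : ℝ) : EReal) *
          elog (ENNReal.ofReal ((X.Pifun (n + 1) t ω)⁻¹ * X.Yfun n t ω))) atTop
        ≤ ((-X.Lambda t : ℝ) : EReal) := by
  have hlog := X.integrable_log_m0 hΛ.ne'
  filter_upwards [X.hθ.ae_tendsto_birkhoffAverage (X.measurable_m0 t).log
      hlog, X.ae_tendsto_inv_mul_logPlus_Yfun_div_mfun hlog hY] with ω hPi hYn
  calc limsup (fun n : ℕ => (((n : ℝ)⁻¹ : ℝ) : EReal) *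
          elog (ENNReal.ofReal ((X.Pifun (n + 1) t ω)⁻¹ * X.Yfun n t ω))) atTop
      ≤ limsup (fun n : ℕ => (((n : ℝ)⁻¹ * logPlus (X.Yfun n t ω / X.mfun n t ω)
          - birkhoffAverage ℝ X.θ (fun ω => Real.log (X.m0 t ω)) n ω : ℝ) : EReal)) atTop :=
        limsup_le_limsup (Eventually.of_forall (X.inv_mul_elog_le · t ω))
    _ = ((-X.Lambda t : ℝ) : EReal) :=
        (EReal.tendsto_coe.2 (by simpa [Lambda] using hYn.sub hPi)).limsup_eq

end
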